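/- Let f: SU(2) → K be a Lie group homomorphism with finite kernel to a compact semisimple group K, arranged so that the image h̃ of the standard coweight generator of the Cartan of SU(2) lies in the positive chamber t₊. Then w₀ h̃ = −h̃, and the lift of the nontrivial Weyl element of SU(2) is j(w̃₀) = w₀ w̄₀, where w̄₀ is the longest element of the Weyl group W̄ of the centralizer Z_K(h̃); in particular w₀ w̄₀ is an involution. -/

import Mathlib

noncomputable section
open scoped RealInnerProductSpace Pointwise

variable {V : Type*} [NormedAddCommGroup V] [InnerProductSpace ℝ V] [FiniteDimensional ℝ V]

/- We identify the Cartan subalgebra `t` of `K` with its dual `t*` by means of a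
Weyl-invariant inner product, so both roots and chambers live in `V = t`, the Weyl group
acts by linear isometries, and the restriction map `f* : t* → t̃*` becomes the orthogonal
projection onto the Cartan subalgebra `t̃ = Vt` of the subgroup `K̃`. -/

/-- The (orthogonal) reflection in the hyperplane perpendicular to `α`. -/
def reflv (α x : V) : V := x - (2 * ⟪α, x⟫ / ⟪α, α⟫) • α

/-- The Weyl group generated by the reflections in the given set of roots. -/
def weylOf (Rs : Set V) : Subgroup (V ≃ₗᵢ[ℝ] V) :=
  Subgroup.closure {w | ∃ α ∈ Rs, ∀ x, w x = reflv α x}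

/-- The set of roots `R = R₊ ∪ (−R₊)` determined by a positive system `R₊`. -/
def rootsOf (Rplus : Finset V) : Set V := (Rplus : Set V) ∪ (-(Rplus : Set V))

/-- The closed positive Weyl chamber `t₊` determined by the positive roots. -/
def chamberOf (Rplus : Finset V) : Set V := {x | ∀ α ∈ Rplus, 0 ≤ ⟪α, x⟫}

/-- The convex cone spanned by a finite set (e.g. the root cone `𝒞 = cone(R₊)`). -/
def coneOf (S : Finset V) : Set V :=
  {x | ∃ c : V → ℝ, (∀ y, 0 ≤ c y) ∧ x = ∑ y ∈ S, c y • y}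

/-- The restriction map `f* : t* → t̃*`, realized as the orthogonal projection onto `t̃`. -/
def projV (Vt : Submodule ℝ V) (x : V) : V := (Vt.orthogonalProjectionOnto x : V)

/-- The subsystem `R̄` of roots vanishing on the small Cartan subalgebra `t̃ = Vt`. -/
def RbarOf (Rplus : Finset V) (Vt : Submodule ℝ V) : Set V :=
  {α ∈ rootsOf Rplus | ∀ u ∈ Vt, ⟪α, u⟫ = 0}

/-- The positive chamber `t̃₊ ⊆ t̃` of the subgroup. -/
def ttplusOf (Rtplus : Finset V) (Vt : Submodule ℝ V) : Set V :=
  {x | x ∈ Vt ∧ ∀ α ∈ Rtplus, 0 ≤ ⟪α, x⟫}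

/-- The cone `t̃_w = w t₊ ∩ t̃`. -/
def cubicle (Rplus : Finset V) (Vt : Submodule ℝ V) (w : V ≃ₗᵢ[ℝ] V) : Set V :=
  (⇑w '' chamberOf Rplus) ∩ (Vt : Set V)

/-- The compatible Weyl set `W_com`: those `w ∈ W` for which the chamber `w t₊` is
compatible with `t̃₊`, i.e. `dim (w t₊ ∩ t̃₊) = dim t̃₊`. -/
def WcomOf (Rplus Rtplus : Finset V) (Vt : Submodule ℝ V) : Set (V ≃ₗᵢ[ℝ] V) :=
  {w | w ∈ weylOf (rootsOf Rplus) ∧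
    Module.finrank ℝ (Submodule.span ℝ ((⇑w '' chamberOf Rplus) ∩ ttplusOf Rtplus Vt))
      = Module.finrank ℝ (Submodule.span ℝ (ttplusOf Rtplus Vt))}

/-- The length of a Weyl group element: the number of positive roots made negative. -/
def lenOf (Rplus : Finset V) (w : V ≃ₗᵢ[ℝ] V) : ℕ :=
  Set.ncard {α : V | α ∈ Rplus ∧ w α ∈ -(Rplus : Set V)}

/-- The relative Weyl set `W_rel`: the shortest representatives of the cosets `W̄\W_com`. -/
def WrelOf (Rplus Rtplus : Finset V) (Vt : Submodule ℝ V) : Set (V ≃ₗᵢ[ℝ] V) :=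
  {v | v ∈ WcomOf Rplus Rtplus Vt ∧
    ∀ b ∈ weylOf (RbarOf Rplus Vt), lenOf Rplus v ≤ lenOf Rplus (b * v)}

set_option linter.unusedSectionVars false

lemma reflv_zero (x : V) : reflv 0 x = x := by simp [reflv]

lemma inner_self_ne (α : V) (h : α ≠ 0) : ⟪α, α⟫ ≠ 0 :=
  fun hc => h ((inner_self_eq_zero (𝕜 := ℝ)).mp hc)

lemma inner_reflv (α x y : V) : ⟪reflv α x, reflv α y⟫ = ⟪x, y⟫ := by
  rcases eq_or_ne α 0 with h | h
  · simp [h, reflv_zero]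
  · have hαα := inner_self_ne α h
    simp only [reflv, inner_sub_left, inner_sub_right, real_inner_smul_left,
      real_inner_smul_right]
    rw [real_inner_comm x α, real_inner_comm y α]
    field_simp
    ring

lemma reflv_reflv (α x : V) : reflv α (reflv α x) = x := by
  rcases eq_or_ne α 0 with h | h
  · simp [h, reflv_zero]
  · have hαα := inner_self_ne α h
    simp only [reflv, inner_sub_right, real_inner_smul_right]
    rw [sub_sub, ← add_smul]
    have : 2 * ⟪α, x⟫ / ⟪α, α⟫ + 2 * (⟪α, x⟫ - 2 * ⟪α, x⟫ / ⟪α, α⟫ * ⟪α, α⟫) / ⟪α, α⟫ = 0 := by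
      field_simp; ring
    rw [this, zero_smul, sub_zero]

def reflvLin (α : V) : V →ₗ[ℝ] V where
  toFun := reflv α
  map_add' x y := by
    simp only [reflv, inner_add_right]
    have : 2 * (⟪α, x⟫ + ⟪α, y⟫) / ⟪α, α⟫
        = 2 * ⟪α, x⟫ / ⟪α, α⟫ + 2 * ⟪α, y⟫ / ⟪α, α⟫ := by ring
    rw [this, add_smul]
    abel
  map_smul' c x := by
    simp only [reflv, real_inner_smul_right, RingHom.id_apply, smul_sub, smul_smul]
    have : 2 * (c * ⟪α, x⟫) / ⟪α, α⟫ = c * (2 * ⟪α, x⟫ / ⟪α, α⟫) := by ring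
    rw [this]

/-- The reflection as a linear isometry equivalence. -/
def rf (α : V) : V ≃ₗᵢ[ℝ] V :=
  { LinearEquiv.ofInvolutive (reflvLin α) (fun x => reflv_reflv α x) with
    norm_map' := fun x => by
      show ‖reflv α x‖ = ‖x‖
      rw [norm_eq_sqrt_real_inner, norm_eq_sqrt_real_inner]
      exact congrArg Real.sqrt (inner_reflv α x x) }

@[simp] lemma rf_apply (α x : V) : rf α x = reflv α x := rfl

lemma rf_mul_self (α : V) : rf α * rf α = 1 := by
  ext x
  exact reflv_reflv α x

lemma rf_inv (α : V) : (rf α)⁻¹ = rf α :=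
  inv_eq_of_mul_eq_one_left (rf_mul_self α)

lemma reflv_self (α : V) : reflv α α = -α := by
  rcases eq_or_ne α 0 with h | h
  · simp [h, reflv_zero]
  · have hαα := inner_self_ne α h
    rw [reflv]
    rw [show 2 * ⟪α, α⟫ / ⟪α, α⟫ = 2 by field_simp]
    module

lemma reflv_of_orth (α x : V) (h : ⟪α, x⟫ = 0) : reflv α x = x := by
  simp [reflv, h]

lemma rf_conj (w : V ≃ₗᵢ[ℝ] V) (α : V) : rf (w α) = w * rf α * w⁻¹ := by
  ext x
  simp only [LinearIsometryEquiv.coe_mul, Function.comp_apply, LinearIsometryEquiv.coe_inv,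
    rf_apply]
  rcases eq_or_ne α 0 with h | h
  · simp [h, reflv_zero]
  · have h1 : ⟪w α, x⟫ = ⟪α, w.symm x⟫ := by
      conv_lhs => rw [← w.apply_symm_apply x]
      exact w.inner_map_map α (w.symm x)
    have h2 : ⟪w α, w α⟫ = ⟪α, α⟫ := w.inner_map_map α α
    rw [reflv, reflv, h1, h2, map_sub, w.apply_symm_apply, map_smul]

lemma rf_smul (α : V) (c : ℝ) (hc : c ≠ 0) : rf (c • α) = rf α := by
  ext x
  simp only [rf_apply, reflv, real_inner_smul_left, real_inner_smul_right, smul_smul]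
  rcases eq_or_ne α 0 with h | h
  · simp [h]
  · have hαα := inner_self_ne α h
    congr 1
    rw [show 2 * (c * ⟪α, x⟫) / (c * (c * ⟪α, α⟫)) * c = 2 * ⟪α, x⟫ / ⟪α, α⟫ by
      field_simp]

lemma rf_mem_weylOf {Rs : Set V} {α : V} (h : α ∈ Rs) : rf α ∈ weylOf Rs :=
  Subgroup.subset_closure ⟨α, h, fun _ => rfl⟩

lemma gen_eq_rf {g : V ≃ₗᵢ[ℝ] V} {α : V} (h : ∀ x, g x = reflv α x) : g = rf α := by
  ext x; exact h x

lemma weyl_maps {Rs : Set V} (hstab' : ∀ α ∈ Rs, ∀ β ∈ Rs, reflv α β ∈ Rs)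
    {w : V ≃ₗᵢ[ℝ] V} (hw : w ∈ weylOf Rs) :
    (∀ β ∈ Rs, w β ∈ Rs) ∧ (∀ β ∈ Rs, w⁻¹ β ∈ Rs) := by
  induction hw using Subgroup.closure_induction with
  | mem g hg =>
    obtain ⟨α, hα, hgα⟩ := hg
    have hg' : g = rf α := gen_eq_rf hgα
    constructor
    · intro β hβ; rw [hg']; exact hstab' α hα β hβ
    · intro β hβ; rw [hg', rf_inv]; exact hstab' α hα β hβ
  | one => simp
  | mul x y hx hy ihx ihy =>
    refine ⟨fun β hβ => ?_, fun β hβ => ?_⟩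
    · rw [LinearIsometryEquiv.coe_mul, Function.comp_apply]
      exact ihx.1 _ (ihy.1 β hβ)
    · rw [mul_inv_rev, LinearIsometryEquiv.coe_mul, Function.comp_apply]
      exact ihy.2 _ (ihx.2 β hβ)
  | inv x hx ihx => exact ⟨fun β hβ => by simpa using ihx.2 β hβ, fun β hβ => by simpa using ihx.1 β hβ⟩

lemma weyl_fix {Rs : Set V} {h : V} (horth : ∀ α ∈ Rs, ⟪α, h⟫ = 0)
    {w : V ≃ₗᵢ[ℝ] V} (hw : w ∈ weylOf Rs) : w h = h ∧ w⁻¹ h = h := by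
  induction hw using Subgroup.closure_induction with
  | mem g hg =>
    obtain ⟨α, hα, hgα⟩ := hg
    have hg' : g = rf α := gen_eq_rf hgα
    have : reflv α h = h := reflv_of_orth α h (horth α hα)
    exact ⟨by rw [hg']; exact this, by rw [hg', rf_inv]; exact this⟩
  | one => simp
  | mul x y hx hy ihx ihy =>
    refine ⟨?_, ?_⟩
    · rw [LinearIsometryEquiv.coe_mul, Function.comp_apply, ihy.1, ihx.1]
    · rw [mul_inv_rev, LinearIsometryEquiv.coe_mul, Function.comp_apply, ihx.2, ihy.2]
  | inv x hx ihx => exact ⟨by simpa using ihx.2, by simpa using ihx.1⟩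

section Core

variable {Rplus S : Finset V}

/-- Abbreviated hypothesis bundle. -/
structure RootData (Rplus S : Finset V) : Prop where
  hR0 : (0:V) ∉ Rplus
  hstab : ∀ α ∈ rootsOf Rplus, ∀ β ∈ rootsOf Rplus, reflv α β ∈ rootsOf Rplus
  hSsub : (S : Set V) ⊆ (Rplus : Set V)
  hSindep : LinearIndependent ℝ (fun x : S => (x : V))
  hSbase : ∀ α ∈ Rplus, ∃ c : V → ℝ, (∀ y, 0 ≤ c y) ∧ (α : V) = ∑ y ∈ S, c y • y

variable (hD : RootData Rplus S)
include hD

lemma zero_not_root : (0:V) ∉ rootsOf Rplus := by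
  intro h
  rcases h with h | h
  · exact hD.hR0 h
  · rw [Set.mem_neg, neg_zero] at h; exact hD.hR0 h

lemma root_neg {β : V} (h : β ∈ rootsOf Rplus) : -β ∈ rootsOf Rplus := by
  rcases h with h | h
  · exact Or.inr (by rwa [Set.mem_neg, neg_neg])
  · exact Or.inl (by rwa [Set.mem_neg] at h)

lemma coeff_zero (c : V → ℝ) (hc : ∑ y ∈ S, c y • y = 0) : ∀ y ∈ S, c y = 0 := by
  have h := Fintype.linearIndependent_iff.mp hD.hSindep (fun y : S => c y)
  have hsum : ∑ y : S, c y • (y : V) = 0 := by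
    rwa [Finset.sum_coe_sort S (fun y => c y • y)]
  intro y hy
  exact h hsum ⟨y, hy⟩

lemma mem_pos_of_combo {β : V} (hβ : β ∈ rootsOf Rplus) (c : V → ℝ)
    (hc : ∀ y, 0 ≤ c y) (hcomb : β = ∑ y ∈ S, c y • y) : β ∈ Rplus := by
  rcases hβ with h | h
  · exact h
  · rw [Set.mem_neg] at h
    obtain ⟨d, hd, hdcomb⟩ := hD.hSbase (-β) h
    have hzero : ∑ y ∈ S, (c y + d y) • y = 0 := by
      simp only [add_smul, Finset.sum_add_distrib, ← hcomb, ← hdcomb]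
      abel
    have hco := coeff_zero hD (fun y => c y + d y) hzero
    have hβ0 : β = 0 := by
      rw [hcomb]
      apply Finset.sum_eq_zero
      intro y hy
      have h' : c y + d y = 0 := by simpa using hco y hy
      have : c y = 0 := le_antisymm (by linarith [hd y]) (hc y)
      simp [this]
    exact absurd (hβ0 ▸ h) (by simpa using hD.hR0)

lemma not_pos_neg {β : V} (h1 : β ∈ Rplus) (h2 : β ∈ -(Rplus : Set V)) : False := by
  rw [Set.mem_neg] at h2
  obtain ⟨c, hc, hcomb⟩ := hD.hSbase β h1
  obtain ⟨d, hd, hdcomb⟩ := hD.hSbase (-β) h2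
  have hzero : ∑ y ∈ S, (c y + d y) • y = 0 := by
    simp only [add_smul, Finset.sum_add_distrib, ← hcomb, ← hdcomb]
    abel
  have hco := coeff_zero hD (fun y => c y + d y) hzero
  have hβ0 : β = 0 := by
    rw [hcomb]
    apply Finset.sum_eq_zero
    intro y hy
    have h' : c y + d y = 0 := by simpa using hco y hy
    have : c y = 0 := le_antisymm (by linarith [hd y]) (hc y)
    simp [this]
  exact hD.hR0 (hβ0 ▸ h1)

lemma span_S_top (hspan : Submodule.span ℝ (rootsOf Rplus) = ⊤) :
    Submodule.span ℝ (S : Set V) = ⊤ := by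
  rw [← top_le_iff, ← hspan, Submodule.span_le]
  intro β hβ
  have key : ∀ γ ∈ Rplus, (γ:V) ∈ Submodule.span ℝ (S : Set V) := by
    intro γ hγ
    obtain ⟨c, hc, hcomb⟩ := hD.hSbase γ hγ
    rw [hcomb]
    exact Submodule.sum_mem _ fun y hy =>
      Submodule.smul_mem _ _ (Submodule.subset_span hy)
  rcases hβ with h | h
  · exact key β h
  · rw [Set.mem_neg] at h
    have := key (-β) h
    simpa using Submodule.neg_mem _ this

lemma exists_dual (hspan : Submodule.span ℝ (rootsOf Rplus) = ⊤) :
    ∃ d : V, ∀ y ∈ S, ⟪y, d⟫ = 1 := by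
  have hS : Submodule.span ℝ (Set.range (fun x : S => (x : V))) = ⊤ := by
    rw [Subtype.range_coe_subtype]
    simpa using span_S_top hD hspan
  let B : Module.Basis S ℝ V := Module.Basis.mk hD.hSindep (by rw [hS])
  let L : V →ₗ[ℝ] ℝ := ∑ y : S, B.coord y
  let d : V := (InnerProductSpace.toDual ℝ V).symm (LinearMap.toContinuousLinearMap L)
  refine ⟨d, fun y hy => ?_⟩
  have h1 : ⟪d, (y:V)⟫ = L y := by
    rw [show ⟪d, (y:V)⟫ = (LinearMap.toContinuousLinearMap L) y from
      InnerProductSpace.toDual_symm_apply]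
    rfl
  rw [real_inner_comm, h1]
  have hBy : (y : V) = B ⟨y, hy⟩ := by simp [B]
  rw [hBy]
  simp only [L, LinearMap.sum_apply, Module.Basis.coord_apply, Module.Basis.repr_self]
  rw [Finset.sum_eq_single_of_mem (⟨y, hy⟩ : {x // x ∈ S}) (Finset.mem_univ _)]
  · simp
  · intro b _ hb
    exact Finsupp.single_eq_of_ne (fun h => hb h)


omit hD in
lemma inner_sum_combo (c : V → ℝ) (γ : V) :
    ⟪∑ y ∈ S, c y • y, γ⟫ = ∑ y ∈ S, c y * ⟪y, γ⟫ := by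
  rw [sum_inner]
  exact Finset.sum_congr rfl fun y _ => real_inner_smul_left _ _ _

lemma strict_dom {d : V} (hd : ∀ y ∈ S, ⟪y, d⟫ = 1) {β : V} (hβ : β ∈ Rplus) :
    0 < ⟪β, d⟫ := by
  obtain ⟨c, hc, hcomb⟩ := hD.hSbase β hβ
  have hsum : ⟪β, d⟫ = ∑ y ∈ S, c y := by
    have h' := inner_sum_combo (S := S) c d
    rw [← hcomb] at h'
    rw [h']
    exact Finset.sum_congr rfl fun y hy => by rw [hd y hy, mul_one]
  rw [hsum]
  rcases (Finset.sum_nonneg fun y _ => hc y).lt_or_eq with h | h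
  · exact h
  · exfalso
    have hβ0 : β = 0 := by
      rw [hcomb]
      apply Finset.sum_eq_zero
      intro y hy
      have hcy : c y = 0 :=
        (Finset.sum_eq_zero_iff_of_nonneg fun z _ => hc z).mp h.symm y hy
      simp [hcy]
    exact hD.hR0 (hβ0 ▸ hβ)

lemma exists_simple_pos {β : V} (hβ : β ∈ Rplus) :
    ∃ y ∈ S, 0 < ⟪y, β⟫ := by
  obtain ⟨c, hc, hcomb⟩ := hD.hSbase β hβ
  have hββ : 0 < ⟪β, β⟫ := by
    have hne : β ≠ 0 := fun h => hD.hR0 (h ▸ hβ)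
    exact lt_of_le_of_ne real_inner_self_nonneg (Ne.symm (inner_self_ne β hne))
  have hsum : ⟪β, β⟫ = ∑ y ∈ S, c y * ⟪y, β⟫ := by
    have h' := inner_sum_combo (S := S) c β
    rwa [← hcomb] at h'
  rw [hsum] at hββ
  have h0 : ∑ _y ∈ S, (0:ℝ) < ∑ y ∈ S, c y * ⟪y, β⟫ := by simpa using hββ
  obtain ⟨y, hy, hpos⟩ := Finset.exists_lt_of_sum_lt h0
  refine ⟨y, hy, ?_⟩
  by_contra hle
  push_neg at hle
  have : c y * ⟪y, β⟫ ≤ 0 := mul_nonpos_of_nonneg_of_nonpos (hc y) hle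
  linarith

/-- A simple reflection maps a positive root that is not a multiple of the simple root
to a positive root. -/
lemma simple_reflect_pos {α β : V} (hα : α ∈ S) (hβ : β ∈ Rplus)
    (hnm : ¬ ∃ t : ℝ, β = t • α) : reflv α β ∈ Rplus := by
  classical
  have hαR : α ∈ rootsOf Rplus := Or.inl (hD.hSsub hα)
  have hβR : β ∈ rootsOf Rplus := Or.inl hβ
  have hroot : reflv α β ∈ rootsOf Rplus := hD.hstab α hαR β hβR
  rcases hroot with h | h
  · exact h
  · exfalso
    rw [Set.mem_neg] at h
    obtain ⟨c, hc, hcomb⟩ := hD.hSbase β hβ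
    obtain ⟨e, he, hecomb⟩ := hD.hSbase (-(reflv α β)) h
    set k : ℝ := 2 * ⟪α, β⟫ / ⟪α, α⟫ with hk
    have hrefl : reflv α β = β - k • α := rfl
    have hzero : ∑ y ∈ S, (c y + e y - (if y = α then k else 0)) • y = 0 := by
      simp only [sub_smul, add_smul, Finset.sum_sub_distrib, Finset.sum_add_distrib, ← hcomb, ← hecomb]
      have hα' : ∑ y ∈ S, (if y = α then k else 0) • y = k • α := by
        rw [Finset.sum_eq_single_of_mem α hα]
        · simp
        · intro b _ hb; simp [hb]
      rw [hα', hrefl]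
      abel
    have hco := coeff_zero hD _ hzero
    have hcz : ∀ y ∈ S, y ≠ α → c y = 0 := by
      intro y hy hyne
      have h' := hco y hy
      simp only [hyne, if_false] at h'
      have : c y + e y = 0 := by simpa using h'
      linarith [hc y, he y]
    apply hnm
    refine ⟨c α, ?_⟩
    rw [hcomb, Finset.sum_eq_single_of_mem α hα]
    intro b hb hbne
    simp [hcz b hb hbne]

end Core

/-- Product of reflections along a word. -/
def wordProd (l : List V) : V ≃ₗᵢ[ℝ] V := (l.map rf).prod

@[simp] lemma wordProd_nil : wordProd ([] : List V) = 1 := rfl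

lemma wordProd_cons (a : V) (l : List V) : wordProd (a :: l) = rf a * wordProd l := by
  simp [wordProd]

lemma wordProd_append (l1 l2 : List V) :
    wordProd (l1 ++ l2) = wordProd l1 * wordProd l2 := by
  simp [wordProd]

lemma wordProd_singleton (a : V) : wordProd [a] = rf a := by
  simp [wordProd]

lemma wordProd_mem {Rs : Set V} (l : List V) (h : ∀ a ∈ l, a ∈ Rs) :
    wordProd l ∈ weylOf Rs := by
  apply Subgroup.list_prod_mem
  intro x hx
  rw [List.mem_map] at hx
  obtain ⟨a, ha, rfl⟩ := hx
  exact rf_mem_weylOf (h a ha)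

lemma wordProd_reverse (l : List V) : wordProd l.reverse = (wordProd l)⁻¹ := by
  induction l with
  | nil => simp
  | cons a t ih =>
    rw [List.reverse_cons, wordProd_append, wordProd_cons, ih, wordProd_nil, mul_one,
      wordProd_cons, mul_inv_rev, rf_inv]

section Words

variable {Rplus S : Finset V} (hD : RootData Rplus S)
include hD

/-- Every reflection in a positive root is a product of simple reflections. -/
lemma rf_word (hspan : Submodule.span ℝ (rootsOf Rplus) = ⊤) :
    ∀ γ ∈ Rplus, ∃ l : List V, (∀ a ∈ l, a ∈ S) ∧ rf γ = wordProd l := by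
  obtain ⟨d, hd⟩ := exists_dual hD hspan
  -- strong induction on the number of positive roots with smaller pairing with `d`
  set m : V → ℕ := fun γ => (Rplus.filter (fun x => ⟪x, d⟫ < ⟪γ, d⟫)).card with hm
  have main : ∀ n : ℕ, ∀ γ ∈ Rplus, m γ = n →
      ∃ l : List V, (∀ a ∈ l, a ∈ S) ∧ rf γ = wordProd l := by
    intro n
    induction n using Nat.strong_induction_on with
    | _ n ih =>
      intro γ hγ hn
      obtain ⟨y, hy, hyγ⟩ := exists_simple_pos hD hγ
      by_cases hmul : ∃ t : ℝ, γ = t • y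
      · obtain ⟨t, rfl⟩ := hmul
        have ht : t ≠ 0 := by
          rintro rfl
          exact hD.hR0 (by simpa using hγ)
        exact ⟨[y], by simp [hy], by rw [wordProd_singleton, rf_smul y t ht]⟩
      · have hγ' : reflv y γ ∈ Rplus := simple_reflect_pos hD hy hγ hmul
        have hlt : ⟪reflv y γ, d⟫ < ⟪γ, d⟫ := by
          have hyy := inner_self_ne y (fun h => hD.hR0 (by simpa [h] using hD.hSsub hy))
          have hyy' : 0 < ⟪y, y⟫ := lt_of_le_of_ne real_inner_self_nonneg (Ne.symm hyy)
          have hyd : 0 < ⟪y, d⟫ := by rw [hd y hy]; norm_num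
          have : ⟪reflv y γ, d⟫ = ⟪γ, d⟫ - (2 * ⟪y, γ⟫ / ⟪y, y⟫) * ⟪y, d⟫ := by
            rw [reflv, inner_sub_left, real_inner_smul_left]
          rw [this]
          have hk : 0 < 2 * ⟪y, γ⟫ / ⟪y, y⟫ := by positivity
          nlinarith
        have hmlt : m (reflv y γ) < n := by
          rw [← hn, hm]
          apply Finset.card_lt_card
          refine ⟨fun x hx => ?_, fun hsub => ?_⟩
          · rw [Finset.mem_filter] at hx ⊢
            exact ⟨hx.1, hx.2.trans hlt⟩
          · have h1 : reflv y γ ∈ Rplus.filter (fun x => ⟪x, d⟫ < ⟪γ, d⟫) :=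
              Finset.mem_filter.mpr ⟨hγ', hlt⟩
            have h2 := hsub h1
            rw [Finset.mem_filter] at h2
            exact lt_irrefl _ h2.2
        obtain ⟨l, hl, hlw⟩ := ih _ hmlt (reflv y γ) hγ' rfl
        refine ⟨y :: (l ++ [y]), ?_, ?_⟩
        · intro a ha
          rcases List.mem_cons.mp ha with rfl | ha'
          · exact hy
          · rcases List.mem_append.mp ha' with h | h
            · exact hl a h
            · rw [List.mem_singleton.mp h]; exact hy
        · have hγeq : γ = rf y (reflv y γ) := (reflv_reflv y γ).symm
          rw [show rf γ = rf (rf y (reflv y γ)) by rw [← hγeq]]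
          rw [rf_conj (rf y) (reflv y γ), hlw]
          rw [wordProd_cons, wordProd_append, wordProd_singleton, rf_inv, mul_assoc]
  intro γ hγ
  exact main (m γ) γ hγ rfl

/-- Every Weyl group element is a product of simple reflections. -/
lemma exists_word (hspan : Submodule.span ℝ (rootsOf Rplus) = ⊤)
    {w : V ≃ₗᵢ[ℝ] V} (hw : w ∈ weylOf (rootsOf Rplus)) :
    ∃ l : List V, (∀ a ∈ l, a ∈ S) ∧ w = wordProd l := by
  induction hw using Subgroup.closure_induction with
  | mem g hg =>
    obtain ⟨α, hα, hgα⟩ := hg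
    have hg' : g = rf α := gen_eq_rf hgα
    rcases hα with h | h
    · obtain ⟨l, hl, hlw⟩ := rf_word hD hspan α h
      exact ⟨l, hl, hg' ▸ hlw⟩
    · rw [Set.mem_neg] at h
      obtain ⟨l, hl, hlw⟩ := rf_word hD hspan (-α) h
      have : rf α = rf (-α) := by
        rw [show -α = (-1 : ℝ) • α by simp, rf_smul α (-1) (by norm_num)]
      exact ⟨l, hl, by rw [hg', this, hlw]⟩
  | one => exact ⟨[], by simp, rfl⟩
  | mul x y hx hy ihx ihy =>
    obtain ⟨l1, hl1, hl1w⟩ := ihx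
    obtain ⟨l2, hl2, hl2w⟩ := ihy
    exact ⟨l1 ++ l2, fun a ha => (List.mem_append.mp ha).elim (hl1 a) (hl2 a),
      by rw [wordProd_append, hl1w, hl2w]⟩
  | inv x hx ihx =>
    obtain ⟨l, hl, hlw⟩ := ihx
    exact ⟨l.reverse, fun a ha => hl a (List.mem_reverse.mp ha),
      by rw [wordProd_reverse, hlw]⟩

end Words

section Exchange

variable {Rplus S : Finset V} (hD : RootData Rplus S)
include hD

lemma root_cases {β : V} (h : β ∈ rootsOf Rplus) (h2 : β ∉ -(Rplus : Set V)) : β ∈ Rplus := by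
  rcases h with h | h
  · exact h
  · exact absurd h h2

/-- The exchange lemma. -/
lemma exchange : ∀ (l : List V), (∀ a ∈ l, a ∈ S) → ∀ α ∈ S,
    wordProd l α ∈ -(Rplus : Set V) →
    ∃ l' : List V, (∀ a ∈ l', a ∈ S) ∧ l'.length + 1 = l.length ∧
      wordProd l' = wordProd l * rf α := by
  intro l
  induction l with
  | nil =>
    intro _ α hα hneg
    rw [wordProd_nil] at hneg
    exact (not_pos_neg hD (hD.hSsub hα) (by simpa using hneg)).elim
  | cons a t ih =>
    intro hl α hα hneg
    have hat : a ∈ S := hl a List.mem_cons_self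
    have htS : ∀ b ∈ t, b ∈ S := fun b hb => hl b (List.mem_cons_of_mem a hb)
    have htW : wordProd t ∈ weylOf (rootsOf Rplus) :=
      wordProd_mem t (fun b hb => Or.inl (hD.hSsub (htS b hb)))
    set γ := wordProd t α with hγdef
    have hγroot : γ ∈ rootsOf Rplus :=
      (weyl_maps hD.hstab htW).1 α (Or.inl (hD.hSsub hα))
    by_cases hγneg : γ ∈ -(Rplus : Set V)
    · obtain ⟨t', ht'S, ht'len, ht'w⟩ := ih htS α hα hγneg
      refine ⟨a :: t', fun b hb => ?_, by simp [ht'len.symm], ?_⟩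
      · rcases List.mem_cons.mp hb with rfl | hb'
        · exact hat
        · exact ht'S b hb'
      · rw [wordProd_cons, wordProd_cons, ht'w, mul_assoc]
    · have hγpos : γ ∈ Rplus := root_cases hD hγroot hγneg
      have hrγneg : reflv a γ ∈ -(Rplus : Set V) := by
        rw [wordProd_cons] at hneg
        simpa using hneg
      have hmul : ∃ s : ℝ, γ = s • a := by
        by_contra hnm
        exact not_pos_neg hD (simple_reflect_pos hD hat hγpos hnm) hrγneg
      obtain ⟨s, hs⟩ := hmul
      have hs0 : s ≠ 0 := by
        rintro rfl
        exact hD.hR0 (by simpa [hs] using hγpos)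
      have hrfγ : rf γ = rf a := by rw [hs, rf_smul a s hs0]
      have hconj : rf γ = wordProd t * rf α * (wordProd t)⁻¹ := by
        rw [hγdef, rf_conj (wordProd t) α]
      have hkey : rf a * wordProd t = wordProd t * rf α := by
        have := hrfγ.symm.trans hconj
        calc rf a * wordProd t = (wordProd t * rf α * (wordProd t)⁻¹) * wordProd t := by
              rw [← this]
          _ = wordProd t * rf α := by group
      refine ⟨t, htS, by simp, ?_⟩
      rw [wordProd_cons, hkey, mul_assoc, rf_mul_self, mul_one]

lemma word_pos_eq_one : ∀ (n : ℕ) (l : List V), l.length = n → (∀ a ∈ l, a ∈ S) →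
    (∀ β ∈ Rplus, wordProd l β ∈ Rplus) → wordProd l = 1 := by
  intro n
  induction n using Nat.strong_induction_on with
  | _ n ih =>
    intro l hlen hlS hpos
    rcases List.eq_nil_or_concat l with rfl | ⟨t, a, rfl⟩
    · rfl
    · rw [List.concat_eq_append] at hlen hlS hpos ⊢
      have hat : a ∈ S := hlS a (by simp)
      have htS : ∀ b ∈ t, b ∈ S := fun b hb => hlS b (by simp [hb])
      have hsplit : wordProd (t ++ [a]) = wordProd t * rf a := by
        rw [wordProd_append, wordProd_singleton]
      have hta : wordProd t a ∈ -(Rplus : Set V) := by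
        have h1 : wordProd t = wordProd (t ++ [a]) * rf a := by
          rw [hsplit, mul_assoc, rf_mul_self, mul_one]
        have h2 : wordProd t a = -(wordProd (t ++ [a]) a) := by
          rw [h1]
          simp only [LinearIsometryEquiv.coe_mul, Function.comp_apply, rf_apply]
          rw [reflv_self, map_neg]
        rw [h2, Set.mem_neg, neg_neg]
        exact hpos a (hD.hSsub hat)
      obtain ⟨t', ht'S, ht'len, ht'w⟩ := exchange hD t htS a hat hta
      have hweq : wordProd t' = wordProd (t ++ [a]) := by
        rw [ht'w, hsplit]
      have hlt : t'.length < n := by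
        have hca : (t ++ [a]).length = t.length + 1 := by simp
        omega
      have hone := ih t'.length hlt t' rfl ht'S (by rw [hweq]; exact hpos)
      rw [← hweq, hone]

/-- If `w` maps simple roots to positive roots, it maps all positive roots to positive roots. -/
lemma pos_of_S_pos {w : V ≃ₗᵢ[ℝ] V} (hw : w ∈ weylOf (rootsOf Rplus))
    (hS : ∀ y ∈ S, w y ∈ Rplus) : ∀ β ∈ Rplus, w β ∈ Rplus := by
  classical
  intro β hβ
  have hβroot : w β ∈ rootsOf Rplus := (weyl_maps hD.hstab hw).1 β (Or.inl hβ)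
  obtain ⟨c, hc, hcomb⟩ := hD.hSbase β hβ
  -- choose coefficient functions for each `w y`
  have hchoice : ∀ y ∈ S, ∃ e : V → ℝ, (∀ z, 0 ≤ e z) ∧ (w y : V) = ∑ z ∈ S, e z • z :=
    fun y hy => hD.hSbase (w y) (hS y hy)
  set D : V → (V → ℝ) := fun y => if h : y ∈ S then (hchoice y h).choose else 0 with hDdef
  have hDpos : ∀ y ∈ S, ∀ z, 0 ≤ D y z := by
    intro y hy z
    simp only [hDdef, dif_pos hy]
    exact (hchoice y hy).choose_spec.1 z
  have hDcomb : ∀ y ∈ S, (w y : V) = ∑ z ∈ S, D y z • z := by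
    intro y hy
    simp only [hDdef, dif_pos hy]
    exact (hchoice y hy).choose_spec.2
  have hwβ : w β = ∑ z ∈ S, (∑ y ∈ S, c y * D y z) • z := by
    have h1 : w β = ∑ y ∈ S, c y • w y := by
      rw [hcomb, map_sum]
      exact Finset.sum_congr rfl fun y _ => by rw [map_smul]
    rw [h1]
    rw [Finset.sum_congr rfl fun y hy => by rw [hDcomb y hy, Finset.smul_sum]]
    rw [Finset.sum_comm]
    refine Finset.sum_congr rfl fun z _ => ?_
    rw [Finset.sum_smul]
    exact Finset.sum_congr rfl fun y _ => by rw [smul_smul]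
  exact mem_pos_of_combo hD hβroot _
    (fun z => Finset.sum_nonneg fun y hy => mul_nonneg (hc y) (by
      by_cases h : y ∈ S
      · exact hDpos y h z
      · simp [hDdef, dif_neg h]))
    hwβ

/-- A Weyl group element preserving the positive roots is the identity. -/
lemma weyl_pos_eq_one (hspan : Submodule.span ℝ (rootsOf Rplus) = ⊤)
    {w : V ≃ₗᵢ[ℝ] V} (hw : w ∈ weylOf (rootsOf Rplus))
    (hpos : ∀ β ∈ Rplus, w β ∈ Rplus) : w = 1 := by
  obtain ⟨l, hlS, hlw⟩ := exists_word hD hspan hw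
  rw [hlw]
  exact word_pos_eq_one hD l.length l rfl hlS (fun β hβ => by rw [← hlw]; exact hpos β hβ)

/-- Uniqueness of the dominant representative in a Weyl orbit. -/
lemma dominant_unique (hspan : Submodule.span ℝ (rootsOf Rplus) = ⊤)
    {w : V ≃ₗᵢ[ℝ] V} (hw : w ∈ weylOf (rootsOf Rplus)) {x y : V}
    (hx : ∀ α ∈ Rplus, 0 ≤ ⟪α, x⟫) (hy : ∀ α ∈ Rplus, 0 ≤ ⟪α, y⟫)
    (hxy : w x = y) : x = y := by
  obtain ⟨l, hlS, hlw⟩ := exists_word hD hspan hw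
  have main : ∀ (n : ℕ) (l : List V), l.length = n → (∀ a ∈ l, a ∈ S) →
      ∀ x y : V, (∀ α ∈ Rplus, 0 ≤ ⟪α, x⟫) → (∀ α ∈ Rplus, 0 ≤ ⟪α, y⟫) →
      wordProd l x = y → x = y := by
    intro n
    induction n using Nat.strong_induction_on with
    | _ n ih =>
      intro l hlen hlS x y hx hy hxy
      set w' := wordProd l with hw'def
      have hw' : w' ∈ weylOf (rootsOf Rplus) :=
        wordProd_mem l (fun b hb => Or.inl (hD.hSsub (hlS b hb)))
      by_cases hc : ∀ a ∈ S, w' a ∈ Rplus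
      · have hone : w' = 1 := word_pos_eq_one hD n l hlen hlS (pos_of_S_pos hD hw' hc)
        rw [← hxy, hone]
        rfl
      · push_neg at hc
        obtain ⟨α, hα, hwα⟩ := hc
        have hαroot : w' α ∈ rootsOf Rplus :=
          (weyl_maps hD.hstab hw').1 α (Or.inl (hD.hSsub hα))
        have hwαneg : w' α ∈ -(Rplus : Set V) := by
          rcases hαroot with h | h
          · exact absurd h hwα
          · exact h
        have hinner0 : ⟪α, x⟫ = 0 := by
          have h1 : ⟪α, x⟫ = ⟪w' α, y⟫ := by
            rw [← hxy]
            exact (w'.inner_map_map α x).symm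
          have h2 : 0 ≤ ⟪-(w' α), y⟫ := hy _ (Set.mem_neg.mp hwαneg)
          rw [inner_neg_left] at h2
          have h3 := hx α (hD.hSsub hα)
          linarith
        obtain ⟨l', hl'S, hl'len, hl'w⟩ := exchange hD l hlS α hα hwαneg
        have hxy' : wordProd l' x = y := by
          rw [hl'w]
          show w' (rf α x) = y
          rw [rf_apply, reflv_of_orth α x hinner0, hxy]
        exact ih l'.length (by omega) l' rfl hl'S x y hx hy hxy'
  exact main l.length l rfl hlS x y hx hy (by rw [← hlw]; exact hxy)

end Exchange

lemma inner_map_symm (w : V ≃ₗᵢ[ℝ] V) (a b : V) : ⟪w a, b⟫ = ⟪a, w.symm b⟫ := by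
  conv_lhs => rw [← w.apply_symm_apply b]
  exact w.inner_map_map a (w.symm b)


/-- Let `f : SU(2) → K` be a homomorphism with finite kernel into a compact
semisimple group `K`, arranged so that the image `h̃` of the standard coweight generator of
the Cartan of `SU(2)` lies in the positive chamber `t₊`.  Then `w₀ h̃ = −h̃`, and the lift of
the nontrivial Weyl element of `SU(2)` is `j(w̃₀) = w₀ w̄₀`, where `w̄₀` is the longest
element of the Weyl group `W̄` of the centralizer `Z_K(h̃)`; in particular `w₀ w̄₀` is an
involution.  (The lift `u = j(w̃₀)` is characterized by `u h̃ = −h̃` together with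
`u ∈ N_W(S̄)`, where `S̄ = S ∩ R̄` and `R̄` is the set of roots vanishing on `h̃`.) -/
theorem sl2_triple_duality
    (Rplus : Finset V)
    (hR0 : (0 : V) ∉ Rplus)
    (hstab : ∀ α ∈ rootsOf Rplus, ∀ β ∈ rootsOf Rplus, reflv α β ∈ rootsOf Rplus)
    -- `K` semisimple: the roots span `t`
    (hspan : Submodule.span ℝ (rootsOf Rplus) = ⊤)
    -- the semisimple element `h̃` of the sl(2)-triple, nonzero and dominant
    (htld : V) (hne : htld ≠ 0) (hdom : ∀ α ∈ Rplus, 0 ≤ ⟪α, htld⟫)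
    -- `S` is the base of the positive system `R₊`
    (S : Finset V) (hSsub : (S : Set V) ⊆ (Rplus : Set V))
    (hSindep : LinearIndependent ℝ (fun x : S => (x : V)))
    (hSbase : ∀ α ∈ Rplus, ∃ c : V → ℝ, (∀ y, 0 ≤ c y) ∧ (α : V) = ∑ y ∈ S, c y • y)
    -- `S̄ = S ∩ R̄`, the simple roots orthogonal to `h̃`
    (Sbar : Finset V)
    (hSbar : (Sbar : Set V) = (S : Set V) ∩ {α ∈ rootsOf Rplus | ⟪α, htld⟫ = 0})
    -- `w₀`, the longest element of `W`
    (w0 : V ≃ₗᵢ[ℝ] V) (hw0 : w0 ∈ weylOf (rootsOf Rplus))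
    (hw0neg : ⇑w0 '' (Rplus : Set V) = -(Rplus : Set V))
    -- `w̄₀`, the longest element of `W̄ = W(Z_K(h̃))`
    (wbar0 : V ≃ₗᵢ[ℝ] V)
    (hwbar0 : wbar0 ∈ weylOf {α ∈ rootsOf Rplus | ⟪α, htld⟫ = 0})
    (hwbar0neg : ⇑wbar0 '' ((Rplus : Set V) ∩ {α ∈ rootsOf Rplus | ⟪α, htld⟫ = 0})
      = -((Rplus : Set V) ∩ {α ∈ rootsOf Rplus | ⟪α, htld⟫ = 0}))
    -- `u = j(w̃₀)`, the lift of the nontrivial Weyl element of `SU(2)`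
    (u : V ≃ₗᵢ[ℝ] V) (hu : u ∈ weylOf (rootsOf Rplus))
    (huS : ⇑u '' (Sbar : Set V) = (Sbar : Set V)) (huh : u htld = -htld) :
    w0 htld = -htld ∧ u = w0 * wbar0 ∧ (w0 * wbar0) * (w0 * wbar0) = 1 := by
  
  classical
  have hD : RootData Rplus S := ⟨hR0, hstab, hSsub, hSindep, hSbase⟩
  -- Part 1 : `w0 htld = -htld`
  have husymm : u.symm htld = -htld := by
    have h := congrArg u.symm huh
    rw [u.symm_apply_apply, map_neg] at h
    exact neg_eq_iff_eq_neg.mp h.symm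
  have hw0_neg_mem : ∀ β ∈ Rplus, w0 β ∈ -(Rplus : Set V) := fun β hβ =>
    hw0neg ▸ Set.mem_image_of_mem _ hβ
  have hw0symm_neg : ∀ α ∈ Rplus, ∃ β ∈ Rplus, w0.symm α = -β := by
    intro α hα
    have : -α ∈ -(Rplus : Set V) := Set.neg_mem_neg.mpr hα
    rw [← hw0neg] at this
    obtain ⟨β, hβ, hβeq⟩ := this
    refine ⟨β, hβ, ?_⟩
    have h := congrArg w0.symm hβeq
    rw [w0.symm_apply_apply, map_neg] at h
    exact neg_eq_iff_eq_neg.mp h.symm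
  have hw0h : w0 htld = -htld := by
    have hy : ∀ α ∈ Rplus, 0 ≤ ⟪α, (w0 * u) htld⟫ := by
      intro α hα
      have h1 : (w0 * u) htld = -(w0 htld) := by
        simp only [LinearIsometryEquiv.coe_mul, Function.comp_apply, huh, map_neg]
      rw [h1, inner_neg_right]
      have h2 : ⟪α, w0 htld⟫ = ⟪w0.symm α, htld⟫ := by
        rw [real_inner_comm, inner_map_symm, real_inner_comm]
      obtain ⟨β, hβ, hβeq⟩ := hw0symm_neg α hα
      rw [h2, hβeq, inner_neg_left]
      linarith [hdom β hβ]
    have heq : htld = (w0 * u) htld :=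
      dominant_unique hD hspan (mul_mem hw0 hu) hdom hy rfl
    have h1 : (w0 * u) htld = -(w0 htld) := by
      simp only [LinearIsometryEquiv.coe_mul, Function.comp_apply, huh, map_neg]
    rw [h1] at heq
    rw [← neg_eq_iff_eq_neg]
    exact heq.symm
  have hw0symm_h : w0.symm htld = -htld := by
    have h := congrArg w0.symm hw0h
    rw [w0.symm_apply_apply, map_neg] at h
    exact neg_eq_iff_eq_neg.mp h.symm
  -- `wbar0` facts
  set Rbar : Set V := {α ∈ rootsOf Rplus | ⟪α, htld⟫ = 0} with hRbardef
  have hwbar0W : wbar0 ∈ weylOf (rootsOf Rplus) := by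
    have hsub : {w : V ≃ₗᵢ[ℝ] V | ∃ α ∈ Rbar, ∀ x, w x = reflv α x} ⊆
        {w : V ≃ₗᵢ[ℝ] V | ∃ α ∈ rootsOf Rplus, ∀ x, w x = reflv α x} := by
      rintro g ⟨α, hα, hgα⟩
      exact ⟨α, hα.1, hgα⟩
    exact Subgroup.closure_mono hsub hwbar0
  have hwbar0fix := weyl_fix (fun α hα => hα.2) hwbar0
  have hwbar0symm_h : wbar0.symm htld = htld := by
    have := hwbar0fix.2
    rwa [show ((wbar0⁻¹ : V ≃ₗᵢ[ℝ] V) : V → V) = wbar0.symm from rfl] at this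
  -- roots with positive pairing are positive
  have hpos_mem : ∀ β ∈ rootsOf Rplus, 0 < ⟪β, htld⟫ → β ∈ Rplus := by
    intro β hβ hpos
    rcases hβ with h | h
    · exact h
    · exfalso
      have h2 := hdom (-β) (Set.mem_neg.mp h)
      rw [inner_neg_left] at h2
      linarith
  have hw0_pair : ∀ β : V, ⟪w0 β, htld⟫ = -⟪β, htld⟫ := by
    intro β
    rw [inner_map_symm, hw0symm_h, inner_neg_right]
  have hwbar0_pair : ∀ β : V, ⟪wbar0 β, htld⟫ = ⟪β, htld⟫ := by
    intro β
    rw [inner_map_symm, hwbar0symm_h]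
  have hu_pair : ∀ β : V, ⟪u β, htld⟫ = -⟪β, htld⟫ := by
    intro β
    rw [inner_map_symm, husymm, inner_neg_right]
  -- behaviour of v = w0 * wbar0 on positive roots
  set v : V ≃ₗᵢ[ℝ] V := w0 * wbar0 with hvdef
  have hvW : v ∈ weylOf (rootsOf Rplus) := mul_mem hw0 hwbar0W
  have hv_pair : ∀ β : V, ⟪v β, htld⟫ = -⟪β, htld⟫ := by
    intro β
    rw [hvdef, LinearIsometryEquiv.coe_mul, Function.comp_apply, hw0_pair, hwbar0_pair]
  have hv_zero : ∀ β ∈ Rplus, ⟪β, htld⟫ = 0 → v β ∈ Rplus ∧ ⟪v β, htld⟫ = 0 := by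
    intro β hβ h0
    have hmem : β ∈ (Rplus : Set V) ∩ Rbar := ⟨hβ, Or.inl hβ, h0⟩
    have himg : wbar0 β ∈ -((Rplus : Set V) ∩ Rbar) := by
      rw [← hwbar0neg]
      exact Set.mem_image_of_mem _ hmem
    rw [Set.mem_neg] at himg
    obtain ⟨hγpos, _, hγ0⟩ := himg
    have hvβ : v β = -(w0 (-(wbar0 β))) := by
      rw [hvdef, LinearIsometryEquiv.coe_mul, Function.comp_apply, map_neg, neg_neg]
    constructor
    · rw [hvβ]
      have := hw0_neg_mem _ hγpos
      rwa [Set.mem_neg] at this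
    · rw [hv_pair, h0, neg_zero]
  have hv_pos : ∀ β ∈ Rplus, 0 < ⟪β, htld⟫ → -(v β) ∈ Rplus ∧ 0 < ⟪-(v β), htld⟫ := by
    intro β hβ hpos
    have hδ : wbar0 β ∈ Rplus := by
      apply hpos_mem _ ((weyl_maps hstab hwbar0W).1 β (Or.inl hβ))
      rw [hwbar0_pair]; exact hpos
    have hvβ : v β = w0 (wbar0 β) := by
      rw [hvdef, LinearIsometryEquiv.coe_mul, Function.comp_apply]
    constructor
    · rw [hvβ]
      have := hw0_neg_mem _ hδ
      rwa [Set.mem_neg] at this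
    · rw [inner_neg_left, hv_pair]
      simpa using hpos
  -- v is an involution
  have hv2 : v * v = 1 := by
    apply weyl_pos_eq_one hD hspan (mul_mem hvW hvW)
    intro β hβ
    have hvv : (v * v) β = v (v β) := rfl
    rw [hvv]
    rcases (hdom β hβ).lt_or_eq with hpos | h0
    · obtain ⟨h1, h2⟩ := hv_pos β hβ hpos
      obtain ⟨h3, _⟩ := hv_pos _ h1 h2
      rw [map_neg, neg_neg] at h3
      exact h3
    · obtain ⟨h1, h2⟩ := hv_zero β hβ h0.symm
      exact (hv_zero _ h1 h2).1
  -- behaviour of u on positive roots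
  have hSbar_subS : Sbar ⊆ S := by
    intro y hy
    have : (y : V) ∈ (Sbar : Set V) := hy
    rw [hSbar] at this
    exact this.1
  have hSbar_zero : ∀ y ∈ Sbar, ⟪y, htld⟫ = 0 := by
    intro y hy
    have : (y : V) ∈ (Sbar : Set V) := hy
    rw [hSbar] at this
    exact this.2.2
  have hu_zero : ∀ β ∈ Rplus, ⟪β, htld⟫ = 0 → u β ∈ Rplus ∧ ⟪u β, htld⟫ = 0 := by
    intro β hβ h0
    refine ⟨?_, by rw [hu_pair, h0, neg_zero]⟩
    -- β is a nonnegative combination of Sbar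
    obtain ⟨c, hc, hcomb⟩ := hSbase β hβ
    have hvanish : ∀ y ∈ S, y ∉ Sbar → c y = 0 := by
      intro y hyS hyn
      have hsum0 : ∑ y ∈ S, c y * ⟪y, htld⟫ = 0 := by
        rw [← inner_sum_combo, ← hcomb, h0]
      have hterm := (Finset.sum_eq_zero_iff_of_nonneg
        (fun z hz => mul_nonneg (hc z) (hdom z (hSsub hz)))).mp hsum0 y hyS
      have hyne : ⟪y, htld⟫ ≠ 0 := by
        intro hy0
        apply hyn
        have : (y : V) ∈ (S : Set V) ∩ {α ∈ rootsOf Rplus | ⟪α, htld⟫ = 0} :=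
          ⟨hyS, Or.inl (hSsub hyS), hy0⟩
        rw [← hSbar] at this
        exact this
      rcases mul_eq_zero.mp hterm with h | h
      · exact h
      · exact absurd h hyne
    have hcombbar : β = ∑ y ∈ Sbar, c y • y := by
      rw [hcomb]
      exact (Finset.sum_subset hSbar_subS (fun x hx hnx => by rw [hvanish x hx hnx, zero_smul])).symm
    have huSmem : ∀ y ∈ Sbar, u y ∈ Sbar := by
      intro y hy
      have : u y ∈ ⇑u '' (Sbar : Set V) := Set.mem_image_of_mem _ hy
      rw [huS] at this
      exact this
    have husymmS : ∀ z ∈ Sbar, u.symm z ∈ Sbar := by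
      intro z hz
      have : (z : V) ∈ ⇑u '' (Sbar : Set V) := by rw [huS]; exact hz
      obtain ⟨y, hy, hyz⟩ := this
      have : u.symm z = y := by rw [← hyz, u.symm_apply_apply]
      rw [this]; exact hy
    -- u β as combination over Sbar
    have huβ : u β = ∑ z ∈ Sbar, c (u.symm z) • z := by
      rw [hcombbar, map_sum]
      rw [show (∑ y ∈ Sbar, u (c y • y)) = ∑ y ∈ Sbar, c y • u y from
        Finset.sum_congr rfl fun y _ => by rw [map_smul]]
      refine Finset.sum_nbij' (fun y => u y) (fun z => u.symm z) ?_ ?_ ?_ ?_ ?_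
      · intro a ha; exact huSmem a ha
      · intro a ha; exact husymmS a ha
      · intro a _; exact u.symm_apply_apply a
      · intro a _; exact u.apply_symm_apply a
      · intro a _; rw [u.symm_apply_apply]
    set c'' : V → ℝ := fun z => if z ∈ Sbar then c (u.symm z) else 0 with hc''def
    have huβ' : u β = ∑ z ∈ S, c'' z • z := by
      rw [huβ]
      have h1 : ∑ z ∈ Sbar, c (u.symm z) • z = ∑ z ∈ Sbar, c'' z • z :=
        Finset.sum_congr rfl fun z hz => by simp [hc''def, hz]
      rw [h1]
      exact Finset.sum_subset hSbar_subS (fun x _ hnx => by simp [hc''def, hnx])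
    exact mem_pos_of_combo hD ((weyl_maps hstab hu).1 β (Or.inl hβ)) c''
      (fun z => by
        by_cases h : z ∈ Sbar
        · simpa [hc''def, h] using hc (u.symm z)
        · simp [hc''def, h]) huβ'
  have hu_pos : ∀ β ∈ Rplus, 0 < ⟪β, htld⟫ → -(u β) ∈ Rplus ∧ 0 < ⟪-(u β), htld⟫ := by
    intro β hβ hpos
    have hpair : ⟪-(u β), htld⟫ = ⟪β, htld⟫ := by
      rw [inner_neg_left, hu_pair, neg_neg]
    constructor
    · apply hpos_mem _ (root_neg hD ((weyl_maps hstab hu).1 β (Or.inl hβ)))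
      rw [hpair]; exact hpos
    · rw [hpair]; exact hpos
  -- v * u = 1, hence u = v
  have hvu : v * u = 1 := by
    apply weyl_pos_eq_one hD hspan (mul_mem hvW hu)
    intro β hβ
    have hvu' : (v * u) β = v (u β) := rfl
    rw [hvu']
    rcases (hdom β hβ).lt_or_eq with hpos | h0
    · obtain ⟨h1, h2⟩ := hu_pos β hβ hpos
      obtain ⟨h3, _⟩ := hv_pos _ h1 h2
      rw [map_neg, neg_neg] at h3
      exact h3
    · obtain ⟨h1, h2⟩ := hu_zero β hβ h0.symm
      exact (hv_zero _ h1 h2).1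
  have huv : u = v := by
    have hvinv : v⁻¹ = v := inv_eq_of_mul_eq_one_left hv2
    calc u = v⁻¹ * (v * u) := by group
      _ = v⁻¹ := by rw [hvu, mul_one]
      _ = v := hvinv
  exact ⟨hw0h, huv, hv2⟩
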